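/- Let n be a non-negative integer and d = 2^n. Let b_1, b_2, c_1, c_2, x_1, x_2 ∈ ℝ^d and set b = (b_1; b_2), c = (c_1; c_2), x = (x_1; x_2) ∈ ℝ^{2d} (vertical concatenation). Then the componentwise inequality b ≤ A_{n+1} x ≤ c holds if and only if both: (1) (b_1 + b_2)/2 ≤ A_n x_1 ≤ (c_1 + c_2)/2, and (2) D_n^{-1} max(b_1 − A_n x_1, −c_2 + A_n x_1) ≤ A_n x_2 ≤ D_n^{-1} min(c_1 − A_n x_1, −b_2 + A_n x_1), where max and min are taken componentwise and all inequalities between vectors are componentwise. -/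

import Mathlib

/-- σ(n,k) from the paper: σ(0,1)=1 and, with d = 2^n, σ(n+1,k)=σ(n,k) for 1 ≤ k ≤ d,
σ(n+1,k)=2d+1−σ(n,k−d) for d+1 ≤ k ≤ 2d. -/
def sigmaCF : ℕ → ℕ → ℤ
  | 0, _ => 1
  | n + 1, k => if k ≤ 2 ^ n then sigmaCF n k else 2 * 2 ^ n + 1 - sigmaCF n (k - 2 ^ n)

/-- ξ_{n,k} = 2 cos(π(2σ(n,k) − 1)/2^{n+1}). -/
noncomputable def xiCF (n k : ℕ) : ℝ :=
  2 * Real.cos (Real.pi * (2 * (sigmaCF n k : ℝ) - 1) / 2 ^ (n + 1))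

/-- D_n = diag(ξ_{n+1,1}, …, ξ_{n+1,2^n}). -/
noncomputable def DCF (n : ℕ) : Matrix (Fin (2 ^ n)) (Fin (2 ^ n)) ℝ :=
  Matrix.diagonal fun i => xiCF (n + 1) (i.val + 1)

/-- A_0 = (1), A_{n+1} = [[A_n, D_n A_n], [A_n, −D_n A_n]]. -/
noncomputable def ACF : (n : ℕ) → Matrix (Fin (2 ^ n)) (Fin (2 ^ n)) ℝ
  | 0 => 1
  | n + 1 =>
    Matrix.reindex (finSumFinEquiv.trans (finCongr (by rw [pow_succ, mul_two])))
      (finSumFinEquiv.trans (finCongr (by rw [pow_succ, mul_two])))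
      (Matrix.fromBlocks (ACF n) (DCF n * ACF n) (ACF n) (-(DCF n * ACF n)))

/-- Vertical concatenation (x; y) of two vectors of length 2^n. -/
def vcat {α : Type*} {n : ℕ} (x y : Fin (2 ^ n) → α) : Fin (2 ^ (n + 1)) → α :=
  fun i => Fin.append x y (finCongr (by rw [pow_succ, mul_two]) i)

/-!
Splitting `x = (x₁; x₂)`, the block form of `A_{n+1}` gives
`A_{n+1} x = (A_n x₁ + D_n A_n x₂; A_n x₁ - D_n A_n x₂)`, so in row `i`, with `a = (A_n x₁)ᵢ`,
`t = (A_n x₂)ᵢ` and `ξ` the `i`-th diagonal entry of `D_n`, the constraint reads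
`b₁ᵢ ≤ a + ξ t ≤ c₁ᵢ` and `b₂ᵢ ≤ a - ξ t ≤ c₂ᵢ`. Adding the two gives the bounds on `a`, and
since `ξ > 0` we may divide by it to get the bounds on `t`. Positivity holds because for
`k ≤ 2^n` the index `σ(n+1,k) = σ(n,k)` lies in `[1, 2^n]`, which puts the cosine's argument
in `(0, π/2)`.
-/

open Matrix

lemma sigmaCF_mem_Icc {n k : ℕ} (hk₁ : 1 ≤ k) (hk₂ : k ≤ 2 ^ n) :
    sigmaCF n k ∈ Set.Icc 1 (2 ^ n) := by
  induction n generalizing k with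
  | zero => simp [sigmaCF]
  | succ n ih =>
    rw [sigmaCF]
    split_ifs with h
    · exact ⟨(ih hk₁ h).1, (ih hk₁ h).2.trans (by gcongr <;> norm_num)⟩
    · obtain ⟨h₁, h₂⟩ := ih (k := k - 2 ^ n) (by omega) (by omega)
      constructor <;> linarith [pow_succ (2 : ℤ) n]

lemma xiCF_succ_pos {n k : ℕ} (hk₁ : 1 ≤ k) (hk₂ : k ≤ 2 ^ n) : 0 < xiCF (n + 1) k := by
  have hσ : sigmaCF (n + 1) k = sigmaCF n k := if_pos hk₂
  obtain ⟨h₁, h₂⟩ := sigmaCF_mem_Icc hk₁ hk₂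
  have h₁' : (1 : ℝ) ≤ sigmaCF n k := by exact_mod_cast h₁
  have h₂' : (sigmaCF n k : ℝ) ≤ 2 ^ n := by exact_mod_cast h₂
  have hpow : (2 : ℝ) ^ (n + 1 + 1) = 4 * 2 ^ n := by ring
  unfold xiCF
  rw [hσ]
  refine mul_pos two_pos (Real.cos_pos_of_mem_Ioo ⟨?_, ?_⟩)
  · have hπ := Real.pi_pos
    have : 0 < Real.pi * (2 * (sigmaCF n k : ℝ) - 1) / 2 ^ (n + 1 + 1) := by
      apply div_pos <;> [nlinarith; positivity]
    linarith
  · rw [div_lt_div_iff₀ (by positivity) two_pos, hpow]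
    nlinarith [Real.pi_pos]

lemma inv_diagonal_of_ne_zero {ι K : Type*} [Fintype ι] [DecidableEq ι] [Field K]
    {v : ι → K} (hv : ∀ i, v i ≠ 0) : (diagonal v)⁻¹ = diagonal v⁻¹ := by
  refine inv_eq_left_inv ?_
  rw [diagonal_mul_diagonal, ← diagonal_one]
  exact congrArg diagonal (funext fun i => inv_mul_cancel₀ (hv i))

lemma DCF_inv_mulVec (n : ℕ) (v : Fin (2 ^ n) → ℝ) :
    (DCF n)⁻¹ *ᵥ v = fun i => (xiCF (n + 1) (i.val + 1))⁻¹ * v i := by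
  rw [DCF, inv_diagonal_of_ne_zero fun i => (xiCF_succ_pos (by omega) (by omega)).ne']
  exact funext fun _ => mulVec_diagonal _ _ _

lemma DCF_mulVec (n : ℕ) (v : Fin (2 ^ n) → ℝ) :
    DCF n *ᵥ v = fun i => xiCF (n + 1) (i.val + 1) * v i :=
  funext fun _ => mulVec_diagonal _ _ _

def finSumFinPowEquiv (n : ℕ) : Fin (2 ^ n) ⊕ Fin (2 ^ n) ≃ Fin (2 ^ (n + 1)) :=
  finSumFinEquiv.trans (finCongr (by rw [pow_succ, mul_two]))

lemma vcat_comp_finSumFinPowEquiv {α : Type*} {n : ℕ} (x y : Fin (2 ^ n) → α) :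
    vcat x y ∘ finSumFinPowEquiv n = Sum.elim x y := by
  ext (i | i)
  · simp [vcat, finSumFinPowEquiv]
  · simp only [vcat, finSumFinPowEquiv, Function.comp_apply, Equiv.trans_apply, finCongr_apply,
      Fin.cast_cast, Fin.cast_eq_self, finSumFinEquiv_apply_right, Fin.append_right, Sum.elim_inr]

lemma vcat_eq_sumElim_comp {α : Type*} {n : ℕ} (x y : Fin (2 ^ n) → α) :
    vcat x y = Sum.elim x y ∘ (finSumFinPowEquiv n).symm := by
  rw [← vcat_comp_finSumFinPowEquiv, Function.comp_assoc, Equiv.self_comp_symm,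
    Function.comp_id]

lemma vcat_le_vcat_iff {α : Type*} [LE α] {n : ℕ} {x y x' y' : Fin (2 ^ n) → α} :
    vcat x y ≤ vcat x' y' ↔ x ≤ x' ∧ y ≤ y' := by
  rw [← Sum.elim_le_elim_iff, ← vcat_comp_finSumFinPowEquiv, ← vcat_comp_finSumFinPowEquiv]
  exact (finSumFinPowEquiv n).forall_congr_right.symm

lemma ACF_succ (n : ℕ) :
    ACF (n + 1) = reindex (finSumFinPowEquiv n) (finSumFinPowEquiv n)
      (fromBlocks (ACF n) (DCF n * ACF n) (ACF n) (-(DCF n * ACF n))) :=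
  rfl

lemma ACF_succ_mulVec_vcat (n : ℕ) (x₁ x₂ : Fin (2 ^ n) → ℝ) :
    ACF (n + 1) *ᵥ vcat x₁ x₂ =
      vcat (ACF n *ᵥ x₁ + DCF n *ᵥ (ACF n *ᵥ x₂)) (ACF n *ᵥ x₁ - DCF n *ᵥ (ACF n *ᵥ x₂)) := by
  rw [ACF_succ, reindex_apply, submatrix_mulVec_equiv, vcat_eq_sumElim_comp, vcat_eq_sumElim_comp,
    Equiv.symm_symm, Function.comp_assoc, Equiv.symm_comp_self, Function.comp_id,
    fromBlocks_mulVec, Sum.elim_comp_inl, Sum.elim_comp_inr, neg_mulVec, mulVec_mulVec,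
    sub_eq_add_neg]

lemma le_add_mul_le_and_le_sub_mul_le_iff {K : Type*} [Field K] [LinearOrder K]
    [IsStrictOrderedRing K] {d a t b₁ b₂ c₁ c₂ : K} (hd : 0 < d) :
    ((b₁ ≤ a + d * t ∧ b₂ ≤ a - d * t) ∧ a + d * t ≤ c₁ ∧ a - d * t ≤ c₂) ↔
      (b₁ + b₂) / 2 ≤ a ∧ a ≤ (c₁ + c₂) / 2 ∧
        d⁻¹ * max (b₁ - a) (-c₂ + a) ≤ t ∧ t ≤ d⁻¹ * min (c₁ - a) (-b₂ + a) := by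
  rw [inv_mul_le_iff₀ hd, max_le_iff, le_inv_mul_iff₀ hd, le_min_iff]
  constructor
  · rintro ⟨⟨_, _⟩, _, _⟩
    refine ⟨?_, ?_, ⟨?_, ?_⟩, ?_, ?_⟩ <;> linarith
  · rintro ⟨_, _, ⟨_, _⟩, _, _⟩
    refine ⟨⟨?_, ?_⟩, ?_, ?_⟩ <;> linarith

/-- The componentwise inequality `b ≤ A_{n+1} x ≤ c`, with `b = (b₁; b₂)`, `c = (c₁; c₂)`,
`x = (x₁; x₂)`, holds iff `(b₁+b₂)/2 ≤ A_n x₁ ≤ (c₁+c₂)/2` and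
`D_n⁻¹ max(b₁ − A_n x₁, −c₂ + A_n x₁) ≤ A_n x₂ ≤ D_n⁻¹ min(c₁ − A_n x₁, −b₂ + A_n x₁)`,
where `max`, `min` and all inequalities are componentwise. -/
theorem ACF_box_iff (n : ℕ) (b₁ b₂ c₁ c₂ x₁ x₂ : Fin (2 ^ n) → ℝ) :
    (vcat b₁ b₂ ≤ (ACF (n + 1)).mulVec (vcat x₁ x₂) ∧
        (ACF (n + 1)).mulVec (vcat x₁ x₂) ≤ vcat c₁ c₂) ↔
      ((fun i => (b₁ i + b₂ i) / 2) ≤ (ACF n).mulVec x₁ ∧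
        (ACF n).mulVec x₁ ≤ (fun i => (c₁ i + c₂ i) / 2) ∧
        (DCF n)⁻¹.mulVec
            (fun i => max (b₁ i - (ACF n).mulVec x₁ i) (-c₂ i + (ACF n).mulVec x₁ i)) ≤
          (ACF n).mulVec x₂ ∧
        (ACF n).mulVec x₂ ≤
          (DCF n)⁻¹.mulVec
            (fun i => min (c₁ i - (ACF n).mulVec x₁ i) (-b₂ i + (ACF n).mulVec x₁ i))) := by
  rw [ACF_succ_mulVec_vcat, vcat_le_vcat_iff, vcat_le_vcat_iff, DCF_mulVec, DCF_inv_mulVec,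
    DCF_inv_mulVec]
  simp only [Pi.le_def, Pi.add_apply, Pi.sub_apply, ← forall_and]
  exact forall_congr' fun i =>
    le_add_mul_le_and_le_sub_mul_le_iff (xiCF_succ_pos (by omega) (by omega))
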